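/- Let q ∈ C_0^∞(ℝ^d) with Fourier transform q̂ vanishing to order m at 0, i.e. q̂(ξ) = O(|ξ|^m) near 0, and let γ = min(7/4, d/2 + m) with d ≤ 3. Then the integral ∫_{ℝ^d} |q̂(ξ)|² / (1 + N²|ξ|²)² dξ is O(N^{-2γ}) as N → ∞. -/

import Mathlib

open MeasureTheory

/-- Fourier transform with the convention `q̂(ξ) = ∫ e^{-i⟨x,ξ⟩} q(x) dx`. -/
noncomputable def ftransform {d : ℕ} (f : EuclideanSpace ℝ (Fin d) → ℂ)
    (ξ : EuclideanSpace ℝ (Fin d)) : ℂ :=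
  ∫ x, Complex.exp (-Complex.I * ((inner ℝ x ξ : ℝ) : ℂ)) * f x

open Real FourierTransform Metric Set RealInnerProductSpace

set_option maxHeartbeats 1600000

/-- if `q̂` vanishes to order `m` at `0`, `d ≤ 3`, and
`γ = min(7/4, d/2 + m)`, then `∫ |q̂(ξ)|²/(1+N²|ξ|²)² dξ = O(N^{-2γ})`. -/
theorem stmt5 (d m : ℕ) (hd : d ≤ 3) (q : EuclideanSpace ℝ (Fin d) → ℂ)
    (hq : ContDiff ℝ (⊤ : ℕ∞) q) (hqs : HasCompactSupport q)
    (hvan : ∃ C₀ ε : ℝ, 0 < ε ∧ ∀ ξ, ‖ξ‖ ≤ ε → ‖ftransform q ξ‖ ≤ C₀ * ‖ξ‖ ^ m) :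
    ∃ C : ℝ, ∀ N : ℝ, 1 ≤ N →
      ∫ ξ, ‖ftransform q ξ‖ ^ 2 / (1 + N ^ 2 * ‖ξ‖ ^ 2) ^ 2 ≤
        C * N ^ (-(2 * min (7 / 4 : ℝ) ((d : ℝ) / 2 + m))) := by
  classical
  obtain ⟨C₀', ε, hε, hvan'⟩ := hvan
  obtain ⟨C₀, hC₀, hvan⟩ : ∃ C₀ : ℝ, 0 ≤ C₀ ∧
      ∀ ξ : EuclideanSpace ℝ (Fin d), ‖ξ‖ ≤ ε → ‖ftransform q ξ‖ ≤ C₀ * ‖ξ‖ ^ m :=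
    ⟨|C₀'|, abs_nonneg _, fun ξ hξ => (hvan' ξ hξ).trans
      (mul_le_mul_of_nonneg_right (le_abs_self _) (by positivity))⟩
  -- the Schwartz map associated to `q`
  have hQdecay : ∀ k n : ℕ, ∃ C : ℝ,
      ∀ x : EuclideanSpace ℝ (Fin d), ‖x‖ ^ k * ‖iteratedFDeriv ℝ n q x‖ ≤ C := by
    intro k n
    have hcont : Continuous fun x : EuclideanSpace ℝ (Fin d) =>
        ‖x‖ ^ k * ‖iteratedFDeriv ℝ n q x‖ :=
      (continuous_norm.pow k).mul (hq.continuous_iteratedFDeriv (by exact_mod_cast le_top)).norm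
    have hsupp : HasCompactSupport fun x : EuclideanSpace ℝ (Fin d) =>
        ‖x‖ ^ k * ‖iteratedFDeriv ℝ n q x‖ :=
      ((hqs.iteratedFDeriv n).norm).mul_left
    obtain ⟨C, hC⟩ := hcont.bounded_above_of_compact_support hsupp
    exact ⟨C, fun x => (Real.le_norm_self _).trans (hC x)⟩
  let Q : SchwartzMap (EuclideanSpace ℝ (Fin d)) ℂ := ⟨q, hq.of_le (by simp), hQdecay⟩
  let S : SchwartzMap (EuclideanSpace ℝ (Fin d)) ℂ := SchwartzMap.fourierTransformCLM ℂ Q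
  have h2π : (2 * π) ≠ 0 := by positivity
  have hkey : ∀ ξ : EuclideanSpace ℝ (Fin d), ftransform q ξ = S ((2 * π)⁻¹ • ξ) := by
    intro ξ
    have h0 : S ((2 * π)⁻¹ • ξ) = 𝓕 q ((2 * π)⁻¹ • ξ) := rfl
    rw [h0, Real.fourier_eq']
    unfold ftransform
    congr 1
    funext x
    rw [smul_eq_mul]
    have hinner : (inner ℝ x ((2 * π)⁻¹ • ξ) : ℝ) = (2 * π)⁻¹ * (inner ℝ x ξ : ℝ) :=
      real_inner_smul_right x ξ (2 * π)⁻¹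
    rw [hinner]
    congr 1
    have h5 : -2 * π * ((2 * π)⁻¹ * (inner ℝ x ξ : ℝ)) = -(inner ℝ x ξ : ℝ) := by
      field_simp
    rw [h5]
    push_cast
    ring
  -- integrability of `‖q̂‖²`
  have hS2 : Integrable (fun w : EuclideanSpace ℝ (Fin d) => ‖S w‖ ^ 2) := by
    obtain ⟨M, hM0, hM⟩ := S.decay 0 0
    refine (Integrable.const_mul S.integrable.norm M).mono'
      ((S.continuous.norm.pow 2).aestronglyMeasurable) ?_
    filter_upwards with w
    have h1 : ‖S w‖ ≤ M := by simpa using hM w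
    have : ‖S w‖ ^ 2 ≤ M * ‖S w‖ := by
      rw [sq]; exact mul_le_mul_of_nonneg_right h1 (norm_nonneg _)
    simpa [abs_of_nonneg (sq_nonneg ‖S w‖)] using this
  have hg_int : Integrable (fun ξ : EuclideanSpace ℝ (Fin d) => ‖ftransform q ξ‖ ^ 2) := by
    have : (fun ξ : EuclideanSpace ℝ (Fin d) => ‖ftransform q ξ‖ ^ 2) =
        fun ξ : EuclideanSpace ℝ (Fin d) => (fun w => ‖S w‖ ^ 2) ((2 * π)⁻¹ • ξ) := by
      ext ξ; rw [hkey ξ]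
    rw [this]
    exact hS2.comp_smul (inv_ne_zero h2π)
  -- the exponent
  set s : ℝ := min (2 * (m : ℝ)) (7 / 2 - (d : ℝ)) with hs_def
  have hs0 : 0 ≤ s := le_min (by positivity) (by
    have : (d : ℝ) ≤ 3 := by exact_mod_cast hd
    linarith)
  have hs2m : s ≤ 2 * (m : ℝ) := min_le_left _ _
  have hs72 : s ≤ 7 / 2 - (d : ℝ) := min_le_right _ _
  have hsd4 : s < 4 - (d : ℝ) := by linarith
  have hexp : -(2 * min (7 / 4 : ℝ) ((d : ℝ) / 2 + m)) = -((d : ℝ) + s) := by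
    rcases le_total (7 / 4 : ℝ) ((d : ℝ) / 2 + m) with h | h
    · rw [min_eq_left h, hs_def, min_eq_right (by linarith)]; ring
    · rw [min_eq_right h, hs_def, min_eq_left (by linarith)]; ring
  -- integrability of the weight
  have hfinrank : (Module.finrank ℝ (EuclideanSpace ℝ (Fin d)) : ℝ) = d := by
    rw [finrank_euclideanSpace_fin]
  have hJ_int : ∀ N : ℝ, 1 ≤ N →
      Integrable (fun ξ : EuclideanSpace ℝ (Fin d) => ‖ξ‖ ^ s / (1 + N ^ 2 * ‖ξ‖ ^ 2) ^ 2) := by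
    intro N hN
    have hmeas : AEStronglyMeasurable (fun ξ : EuclideanSpace ℝ (Fin d) => ‖ξ‖ ^ s / (1 + N ^ 2 * ‖ξ‖ ^ 2) ^ 2) volume := by
      refine Continuous.aestronglyMeasurable ?_
      refine (continuous_norm.rpow_const fun x => Or.inr hs0).div
        ((continuous_const.add (continuous_const.mul (continuous_norm.pow 2))).pow 2)
        fun x => by positivity
    have hint : Integrable (fun ξ : EuclideanSpace ℝ (Fin d) => 4 * (1 + ‖ξ‖) ^ (-(4 - s))) := by
      exact (integrable_one_add_norm (by rw [hfinrank]; linarith)).const_mul 4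
    refine hint.mono' hmeas ?_
    filter_upwards with ξ
    have ht : (0:ℝ) ≤ ‖ξ‖ := norm_nonneg _
    have hb : (0:ℝ) < 1 + ‖ξ‖ := by linarith
    have hnum : ‖ξ‖ ^ s ≤ (1 + ‖ξ‖) ^ s :=
      Real.rpow_le_rpow ht (by linarith) hs0
    have hden : (1 + ‖ξ‖) ^ (4:ℕ) / 4 ≤ (1 + N ^ 2 * ‖ξ‖ ^ 2) ^ 2 := by
      have h1 : (1 + ‖ξ‖) ^ (2:ℕ) ≤ 2 * (1 + ‖ξ‖ ^ 2) := by nlinarith [sq_nonneg (1 - ‖ξ‖)]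
      have hN2 : (1:ℝ) ≤ N ^ 2 := by nlinarith
      have h2 : (1 + ‖ξ‖ ^ 2) ≤ 1 + N ^ 2 * ‖ξ‖ ^ 2 := by
        have := mul_le_mul_of_nonneg_right hN2 (sq_nonneg ‖ξ‖)
        linarith
      have h3 : (1 + ‖ξ‖) ^ (4:ℕ) = ((1 + ‖ξ‖) ^ (2:ℕ)) ^ 2 := by ring
      nlinarith [sq_nonneg ((1 + ‖ξ‖) ^ (2:ℕ)), pow_nonneg hb.le 2, sq_nonneg (1 + ‖ξ‖ ^ 2)]
    have hpos : (0:ℝ) < (1 + N ^ 2 * ‖ξ‖ ^ 2) ^ 2 := by positivity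
    rw [Real.norm_eq_abs, abs_of_nonneg (by positivity)]
    calc ‖ξ‖ ^ s / (1 + N ^ 2 * ‖ξ‖ ^ 2) ^ 2
        ≤ (1 + ‖ξ‖) ^ s / ((1 + ‖ξ‖) ^ (4:ℕ) / 4) := by
          exact div_le_div₀ (by positivity) hnum (by positivity) hden
      _ = 4 * (1 + ‖ξ‖) ^ (-(4 - s)) := by
          rw [neg_sub, Real.rpow_sub hb, show ((4:ℝ)) = ((4:ℕ):ℝ) by norm_num,
            Real.rpow_natCast, div_div_eq_mul_div]
          ring
  -- constants
  obtain ⟨K, hK_def⟩ : ∃ K : ℝ,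
      K = ∫ η : EuclideanSpace ℝ (Fin d), ‖η‖ ^ s / (1 + ‖η‖ ^ 2) ^ 2 := ⟨_, rfl⟩
  have hK0 : 0 ≤ K := hK_def ▸ integral_nonneg fun η => by positivity
  obtain ⟨G, hG_def⟩ : ∃ G : ℝ,
      G = ∫ ξ : EuclideanSpace ℝ (Fin d), ‖ftransform q ξ‖ ^ 2 := ⟨_, rfl⟩
  have hG0 : 0 ≤ G := hG_def ▸ integral_nonneg fun ξ => by positivity
  -- scaling identity
  have hscale : ∀ N : ℝ, 1 ≤ N →
      (∫ ξ : EuclideanSpace ℝ (Fin d), ‖ξ‖ ^ s / (1 + N ^ 2 * ‖ξ‖ ^ 2) ^ 2)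
        = N ^ (-((d : ℝ) + s)) * K := by
    intro N hN
    have hN0 : (0:ℝ) < N := lt_of_lt_of_le one_pos hN
    have hcomp : ∀ ξ : EuclideanSpace ℝ (Fin d),
        ‖N • ξ‖ ^ s / (1 + ‖N • ξ‖ ^ 2) ^ 2
          = N ^ s * (‖ξ‖ ^ s / (1 + N ^ 2 * ‖ξ‖ ^ 2) ^ 2) := by
      intro ξ
      have h1 : ‖N • ξ‖ = N * ‖ξ‖ := by
        rw [norm_smul, Real.norm_eq_abs, abs_of_pos hN0]
      rw [h1, Real.mul_rpow hN0.le (norm_nonneg ξ), mul_pow, mul_div_assoc]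
    have h2 := MeasureTheory.Measure.integral_comp_smul
      (volume : Measure (EuclideanSpace ℝ (Fin d)))
      (fun η : EuclideanSpace ℝ (Fin d) => ‖η‖ ^ s / (1 + ‖η‖ ^ 2) ^ 2) N
    rw [← hK_def] at h2
    simp only [hcomp] at h2
    rw [integral_const_mul, finrank_euclideanSpace_fin, smul_eq_mul,
      abs_of_pos (by positivity)] at h2
    apply mul_left_cancel₀ (ne_of_gt (Real.rpow_pos_of_pos hN0 s))
    rw [h2, ← mul_assoc, ← Real.rpow_add hN0,
      show s + -((d : ℝ) + s) = -(d : ℝ) by ring, Real.rpow_neg hN0.le,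
      Real.rpow_natCast]
  -- main estimate
  refine ⟨C₀ ^ 2 * ε ^ (2 * (m : ℝ) - s) * K + (ε ^ 4)⁻¹ * G, ?_⟩
  intro N hN
  have hN0 : (0:ℝ) < N := lt_of_lt_of_le one_pos hN
  rw [hexp]
  have hB1int : Integrable (fun ξ : EuclideanSpace ℝ (Fin d) =>
      C₀ ^ 2 * ε ^ (2 * (m : ℝ) - s) * (‖ξ‖ ^ s / (1 + N ^ 2 * ‖ξ‖ ^ 2) ^ 2)) :=
    (hJ_int N hN).const_mul _
  have hB2int : Integrable (fun ξ : EuclideanSpace ℝ (Fin d) =>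
      (ε ^ 4 * N ^ 4)⁻¹ * ‖ftransform q ξ‖ ^ 2) := hg_int.const_mul _
  have hi1 : Integrable ((ball (0 : EuclideanSpace ℝ (Fin d)) ε).indicator
      (fun ξ => C₀ ^ 2 * ε ^ (2 * (m : ℝ) - s) * (‖ξ‖ ^ s / (1 + N ^ 2 * ‖ξ‖ ^ 2) ^ 2))) :=
    hB1int.indicator measurableSet_ball
  have hi2 : Integrable (((ball (0 : EuclideanSpace ℝ (Fin d)) ε)ᶜ).indicator
      (fun ξ => (ε ^ 4 * N ^ 4)⁻¹ * ‖ftransform q ξ‖ ^ 2)) :=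
    hB2int.indicator measurableSet_ball.compl
  have hh_int : Integrable (fun ξ : EuclideanSpace ℝ (Fin d) =>
      (ball (0 : EuclideanSpace ℝ (Fin d)) ε).indicator
        (fun ξ => C₀ ^ 2 * ε ^ (2 * (m : ℝ) - s) * (‖ξ‖ ^ s / (1 + N ^ 2 * ‖ξ‖ ^ 2) ^ 2)) ξ +
      ((ball (0 : EuclideanSpace ℝ (Fin d)) ε)ᶜ).indicator
        (fun ξ => (ε ^ 4 * N ^ 4)⁻¹ * ‖ftransform q ξ‖ ^ 2) ξ) := hi1.add hi2
  have hpoint : ∀ ξ : EuclideanSpace ℝ (Fin d),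
      ‖ftransform q ξ‖ ^ 2 / (1 + N ^ 2 * ‖ξ‖ ^ 2) ^ 2 ≤
      (ball (0 : EuclideanSpace ℝ (Fin d)) ε).indicator
        (fun ξ => C₀ ^ 2 * ε ^ (2 * (m : ℝ) - s) * (‖ξ‖ ^ s / (1 + N ^ 2 * ‖ξ‖ ^ 2) ^ 2)) ξ +
      ((ball (0 : EuclideanSpace ℝ (Fin d)) ε)ᶜ).indicator
        (fun ξ => (ε ^ 4 * N ^ 4)⁻¹ * ‖ftransform q ξ‖ ^ 2) ξ := by
    intro ξ
    by_cases hξ : ξ ∈ ball (0 : EuclideanSpace ℝ (Fin d)) ε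
    · rw [Set.indicator_of_mem hξ, Set.indicator_of_notMem (by simp [hξ]),
        add_zero]
      have hξε : ‖ξ‖ ≤ ε := (mem_ball_zero_iff.mp hξ).le
      have hnum : ‖ftransform q ξ‖ ^ 2 ≤ C₀ ^ 2 * ε ^ (2 * (m : ℝ) - s) * ‖ξ‖ ^ s := by
        have h1 : ‖ftransform q ξ‖ ^ 2 ≤ (C₀ * ‖ξ‖ ^ m) ^ 2 :=
          pow_le_pow_left₀ (norm_nonneg _) (hvan ξ hξε) 2
        have h2 : (C₀ * ‖ξ‖ ^ m) ^ 2 = C₀ ^ 2 * ‖ξ‖ ^ (2 * m) := by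
          rw [mul_pow, ← pow_mul, mul_comm m 2]
        have h3 : (‖ξ‖ : ℝ) ^ (2 * m) ≤ ε ^ (2 * (m : ℝ) - s) * ‖ξ‖ ^ s := by
          rcases eq_or_lt_of_le (norm_nonneg ξ) with h0 | h0
          · by_cases hm : m = 0
            · have hs0' : s = 0 := le_antisymm (by rw [hm] at hs2m; simpa using hs2m) hs0
              subst hm
              rw [hs0', ← h0]
              simp
            · rw [← h0, zero_pow (by omega : 2 * m ≠ 0)]
              positivity
          · rw [show (‖ξ‖:ℝ) ^ (2 * m) = ‖ξ‖ ^ ((2 * m : ℕ) : ℝ) from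
                (Real.rpow_natCast _ _).symm,
              show ((2 * m : ℕ) : ℝ) = (2 * (m : ℝ) - s) + s by push_cast; ring,
              Real.rpow_add h0]
            exact mul_le_mul_of_nonneg_right
              (Real.rpow_le_rpow (norm_nonneg ξ) hξε (by linarith))
              (Real.rpow_nonneg (norm_nonneg ξ) s)
        calc ‖ftransform q ξ‖ ^ 2 ≤ C₀ ^ 2 * ‖ξ‖ ^ (2 * m) := by rw [← h2]; exact h1
          _ ≤ C₀ ^ 2 * (ε ^ (2 * (m : ℝ) - s) * ‖ξ‖ ^ s) :=
              mul_le_mul_of_nonneg_left h3 (by positivity)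
          _ = C₀ ^ 2 * ε ^ (2 * (m : ℝ) - s) * ‖ξ‖ ^ s := by ring
      calc ‖ftransform q ξ‖ ^ 2 / (1 + N ^ 2 * ‖ξ‖ ^ 2) ^ 2
          ≤ (C₀ ^ 2 * ε ^ (2 * (m : ℝ) - s) * ‖ξ‖ ^ s) / (1 + N ^ 2 * ‖ξ‖ ^ 2) ^ 2 := by
            gcongr
        _ = C₀ ^ 2 * ε ^ (2 * (m : ℝ) - s) * (‖ξ‖ ^ s / (1 + N ^ 2 * ‖ξ‖ ^ 2) ^ 2) := by
            ring
    · rw [Set.indicator_of_notMem hξ, Set.indicator_of_mem (by simpa using hξ),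
        zero_add]
      have hξε : ε ≤ ‖ξ‖ := by
        rw [mem_ball_zero_iff, not_lt] at hξ
        exact hξ
      have hD : ε ^ 4 * N ^ 4 ≤ (1 + N ^ 2 * ‖ξ‖ ^ 2) ^ 2 := by
        have ht2 : ε ^ 2 ≤ ‖ξ‖ ^ 2 := by nlinarith [hξε, hε.le]
        have h5 : N ^ 2 * ε ^ 2 ≤ 1 + N ^ 2 * ‖ξ‖ ^ 2 := by
          have := mul_le_mul_of_nonneg_left ht2 (sq_nonneg N)
          linarith
        have h6 : (N ^ 2 * ε ^ 2) ^ 2 ≤ (1 + N ^ 2 * ‖ξ‖ ^ 2) ^ 2 :=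
          pow_le_pow_left₀ (by positivity) h5 2
        calc ε ^ 4 * N ^ 4 = (N ^ 2 * ε ^ 2) ^ 2 := by ring
          _ ≤ _ := h6
      calc ‖ftransform q ξ‖ ^ 2 / (1 + N ^ 2 * ‖ξ‖ ^ 2) ^ 2
          ≤ ‖ftransform q ξ‖ ^ 2 / (ε ^ 4 * N ^ 4) :=
            div_le_div_of_nonneg_left (sq_nonneg _) (by positivity) hD
        _ = (ε ^ 4 * N ^ 4)⁻¹ * ‖ftransform q ξ‖ ^ 2 := by ring
  have hmono := integral_mono_of_nonneg
    (f := fun ξ : EuclideanSpace ℝ (Fin d) =>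
      ‖ftransform q ξ‖ ^ 2 / (1 + N ^ 2 * ‖ξ‖ ^ 2) ^ 2)
    (Filter.Eventually.of_forall fun ξ => by positivity) hh_int
    (Filter.Eventually.of_forall hpoint)
  refine hmono.trans ?_
  rw [integral_add hi1 hi2, integral_indicator measurableSet_ball,
    integral_indicator measurableSet_ball.compl]
  have e1 : (∫ ξ in ball (0 : EuclideanSpace ℝ (Fin d)) ε,
        C₀ ^ 2 * ε ^ (2 * (m : ℝ) - s) * (‖ξ‖ ^ s / (1 + N ^ 2 * ‖ξ‖ ^ 2) ^ 2))
      ≤ C₀ ^ 2 * ε ^ (2 * (m : ℝ) - s) * (N ^ (-((d : ℝ) + s)) * K) := by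
    rw [integral_const_mul]
    refine mul_le_mul_of_nonneg_left ?_ (by positivity)
    rw [← hscale N hN]
    exact setIntegral_le_integral (hJ_int N hN)
      (Filter.Eventually.of_forall fun ξ => by positivity)
  have e2 : (∫ ξ in (ball (0 : EuclideanSpace ℝ (Fin d)) ε)ᶜ,
        (ε ^ 4 * N ^ 4)⁻¹ * ‖ftransform q ξ‖ ^ 2)
      ≤ (ε ^ 4)⁻¹ * G * N ^ (-((d : ℝ) + s)) := by
    rw [integral_const_mul]
    calc (ε ^ 4 * N ^ 4)⁻¹ * ∫ ξ in (ball (0 : EuclideanSpace ℝ (Fin d)) ε)ᶜ,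
          ‖ftransform q ξ‖ ^ 2
        ≤ (ε ^ 4 * N ^ 4)⁻¹ * G := by
          rw [hG_def]
          exact
            mul_le_mul_of_nonneg_left
              (setIntegral_le_integral hg_int
                (Filter.Eventually.of_forall fun ξ => by positivity)) (by positivity)
      _ = (ε ^ 4)⁻¹ * G * ((N : ℝ) ^ (4:ℕ))⁻¹ := by ring
      _ ≤ (ε ^ 4)⁻¹ * G * N ^ (-((d : ℝ) + s)) := by
          refine mul_le_mul_of_nonneg_left ?_ (by positivity)
          have h4 : ((N : ℝ) ^ (4:ℕ))⁻¹ = N ^ (-(4:ℝ)) := by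
            rw [← Real.rpow_natCast N 4, ← Real.rpow_neg hN0.le]
            norm_num
          rw [h4]
          exact Real.rpow_le_rpow_of_exponent_le hN (by linarith)
  calc (∫ ξ in ball (0 : EuclideanSpace ℝ (Fin d)) ε,
        C₀ ^ 2 * ε ^ (2 * (m : ℝ) - s) * (‖ξ‖ ^ s / (1 + N ^ 2 * ‖ξ‖ ^ 2) ^ 2))
      + ∫ ξ in (ball (0 : EuclideanSpace ℝ (Fin d)) ε)ᶜ,
        (ε ^ 4 * N ^ 4)⁻¹ * ‖ftransform q ξ‖ ^ 2
      ≤ C₀ ^ 2 * ε ^ (2 * (m : ℝ) - s) * (N ^ (-((d : ℝ) + s)) * K)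
        + (ε ^ 4)⁻¹ * G * N ^ (-((d : ℝ) + s)) := add_le_add e1 e2
    _ = (C₀ ^ 2 * ε ^ (2 * (m : ℝ) - s) * K + (ε ^ 4)⁻¹ * G) * N ^ (-((d : ℝ) + s)) := by
        ring
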